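/- Let k ≥ 4 be an even integer, let ζ_k be a primitive k-th root of unity in ℂ, and let ζ_{2k} be a primitive 2k-th root of unity with ζ_{2k}² = ζ_k. Let g be an element of the normalizer of A_k in SL₂(ℂ). Then σ_s(g)·g ∈ A_k if and only if there exists h ∈ A_k such that one of the following holds: (1) g = diag(a, a⁻¹)·h for some a ∈ ℂ with |a| = 1; (2) g = m(x)·h for some nonzero x ∈ ℝ, where m(x) has rows (0, i·x) and (i·x⁻¹, 0); (3) g = m'(x)·h for some nonzero x ∈ ℝ, where m'(x) has rows (0, i·x·ζ_{2k}) and (i·x⁻¹·ζ_{2k}⁻¹, 0). (This computes, for k even, the 1-cocycles Z¹(Gal(ℂ/ℝ), N/A_k) for the Galois action induced by σ_s, where N is the normalizer of A_k.) -/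

import Mathlib

/-!
Since `g` normalizes `A_k`, it conjugates `ω = diag(ζ, ζ⁻¹)` to a power of `ω`, and as `ζ ≠ ζ⁻¹`
this forces `g = diag(u, u⁻¹)` or `g = [[0, q], [-q⁻¹, 0]]`. Then `σ_s(g)·g` is
`diag(|u|², |u|⁻²)`, resp. `diag(-q̄/q, -q/q̄)`, so it lies in `A_k` iff `|u| = 1`, resp.
`-q̄/q = ζʲ = (ζ_{2k}⁻ʲ)⁻²` for some `j`, i.e. iff `q = i·x·ζ_{2k}⁻ʲ` with `x` real.
Right multiplication by `ωⁿ` shifts that exponent of `ζ_{2k}` by `-2n`, so up to `A_k` only its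
parity matters: even exponents give family (2), odd ones family (3).
-/

open Matrix Complex

open scoped MatrixGroups ComplexConjugate

section DiagonalAndAntidiagonal

variable {K : Type*} [Field K] {ζ : K} {ω : SL(2, K)}

theorem diag_mul_diag (a s : K) :
    !![a, 0; 0, a⁻¹] * !![s, 0; 0, s⁻¹] = !![a * s, 0; 0, (a * s)⁻¹] := by
  simp [mul_comm]

theorem antidiag_mul_diag (q s : K) :
    !![0, q; -q⁻¹, 0] * !![s, 0; 0, s⁻¹] = !![0, q * s⁻¹; -(q * s⁻¹)⁻¹, 0] := by
  simp [mul_comm]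

theorem eq_diag_or_antidiag_of_mul_diag_eq {M : Matrix (Fin 2) (Fin 2) K} (hdet : M.det = 1)
    {a b c d : K} (hab : a ≠ b) (h : M * !![a, 0; 0, b] = !![c, 0; 0, d] * M) :
    (∃ u, M = !![u, 0; 0, u⁻¹]) ∨ ∃ q, M = !![0, q; -q⁻¹, 0] := by
  rw [det_fin_two] at hdet
  have h00 := congrFun (congrFun h 0) 0
  have h01 := congrFun (congrFun h 0) 1
  have h10 := congrFun (congrFun h 1) 0
  have h11 := congrFun (congrFun h 1) 1
  simp only [Matrix.mul_apply, Fin.sum_univ_two, of_apply, cons_val', cons_val_zero,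
    cons_val_one, empty_val', cons_val_fin_one, mul_zero, zero_mul, add_zero, zero_add]
    at h00 h01 h10 h11
  have hab' : a - b ≠ 0 := sub_ne_zero.mpr hab
  rw [eta_fin_two M]
  -- `det M = 1` makes the diagonal or the antidiagonal product nonzero, which forces
  -- `(c, d) = (a, b)` or `(c, d) = (b, a)`; as `a ≠ b`, the other two entries then vanish.
  by_cases hdiag : M 0 0 * M 1 1 = 0
  · have hoff : M 0 1 * M 1 0 = -1 := by linear_combination hdiag - hdet
    obtain ⟨h01ne, h10ne⟩ := mul_ne_zero_iff.mp (hoff ▸ neg_ne_zero.mpr one_ne_zero)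
    have hc : c = b := mul_left_cancel₀ h01ne (by linear_combination -h01)
    have hd : d = a := mul_left_cancel₀ h10ne (by linear_combination -h10)
    have m00 : M 0 0 = 0 := by
      simpa [hab'] using (show M 0 0 * (a - b) = 0 by linear_combination h00 + M 0 0 * hc)
    have m11 : M 1 1 = 0 := by
      simpa [hab'] using (show M 1 1 * (a - b) = 0 by linear_combination -h11 - M 1 1 * hd)
    right
    refine ⟨M 0 1, ?_⟩
    have m10 : M 1 0 = -(M 0 1)⁻¹ := by
      field_simp
      linear_combination hoff
    rw [m00, m11, m10]
  · obtain ⟨h00ne, h11ne⟩ := mul_ne_zero_iff.mp hdiag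
    have hc : c = a := mul_left_cancel₀ h00ne (by linear_combination -h00)
    have hd : d = b := mul_left_cancel₀ h11ne (by linear_combination -h11)
    have m01 : M 0 1 = 0 := by
      simpa [hab'] using (show M 0 1 * (a - b) = 0 by linear_combination -h01 - M 0 1 * hc)
    have m10 : M 1 0 = 0 := by
      simpa [hab'] using (show M 1 0 * (a - b) = 0 by linear_combination h10 + M 1 0 * hd)
    left
    refine ⟨M 0 0, ?_⟩
    have m11 : M 1 1 = (M 0 0)⁻¹ :=
      eq_inv_of_mul_eq_one_right (by linear_combination hdet + M 0 1 * m10)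
    rw [m01, m10, m11]

theorem ne_zero_of_coe_eq_diag (hω : (ω : Matrix (Fin 2) (Fin 2) K) = !![ζ, 0; 0, ζ⁻¹]) :
    ζ ≠ 0 := by
  rintro rfl
  simpa [hω] using ω.det_coe

theorem coe_zpow_of_coe_eq_diag (hω : (ω : Matrix (Fin 2) (Fin 2) K) = !![ζ, 0; 0, ζ⁻¹])
    (j : ℤ) : (↑(ω ^ j) : Matrix (Fin 2) (Fin 2) K) = !![ζ ^ j, 0; 0, (ζ ^ j)⁻¹] := by
  have hζ := ne_zero_of_coe_eq_diag hω
  induction j using Int.induction_on with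
  | zero => simp [Matrix.one_fin_two]
  | succ n ih =>
    rw [_root_.zpow_add_one, Matrix.SpecialLinearGroup.coe_mul, ih, hω, zpow_add_one₀ hζ]
    simp [mul_comm]
  | pred n ih =>
    rw [_root_.zpow_sub_one, Matrix.SpecialLinearGroup.coe_mul, ih,
      Matrix.SpecialLinearGroup.coe_inv, hω, zpow_sub_one₀ hζ, adjugate_fin_two]
    simp [mul_comm]

theorem mem_zpowers_iff_of_coe_eq_diag (hω : (ω : Matrix (Fin 2) (Fin 2) K) = !![ζ, 0; 0, ζ⁻¹])
    {M : SL(2, K)} {t : K} (hM : (M : Matrix (Fin 2) (Fin 2) K) = !![t, 0; 0, t⁻¹]) :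
    M ∈ Subgroup.zpowers ω ↔ ∃ j : ℤ, ζ ^ j = t := by
  rw [Subgroup.mem_zpowers_iff]
  refine exists_congr fun j => ?_
  constructor
  · intro h
    simpa [coe_zpow_of_coe_eq_diag hω, hM] using
      congrArg (fun A : SL(2, K) => (↑A : Matrix (Fin 2) (Fin 2) K) 0 0) h
  · rintro rfl
    exact Subtype.ext (by rw [coe_zpow_of_coe_eq_diag hω, hM])

theorem eq_diag_or_antidiag_of_mem_normalizer {g : SL(2, K)}
    (hω : (ω : Matrix (Fin 2) (Fin 2) K) = !![ζ, 0; 0, ζ⁻¹]) (hζ : ζ ≠ ζ⁻¹)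
    (hg : g ∈ Subgroup.normalizer (Subgroup.zpowers ω : Set SL(2, K))) :
    (∃ u, (g : Matrix (Fin 2) (Fin 2) K) = !![u, 0; 0, u⁻¹]) ∨
      ∃ q, (g : Matrix (Fin 2) (Fin 2) K) = !![0, q; -q⁻¹, 0] := by
  obtain ⟨m, hm⟩ := Subgroup.mem_zpowers_iff.mp
    ((Subgroup.mem_normalizer_iff.mp hg ω).mp (Subgroup.mem_zpowers ω))
  have hgω : g * ω = ω ^ m * g := by rw [hm]; group
  refine eq_diag_or_antidiag_of_mul_diag_eq g.det_coe hζ (c := ζ ^ m) (d := (ζ ^ m)⁻¹) ?_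
  simpa [hω, coe_zpow_of_coe_eq_diag hω] using
    congrArg (fun A : SL(2, K) => (↑A : Matrix (Fin 2) (Fin 2) K)) hgω

end DiagonalAndAntidiagonal

theorem map_conj_diag_mul_diag (a : ℂ) :
    (!![a, 0; 0, a⁻¹]).map conj * !![a, 0; 0, a⁻¹] =
      !![(normSq a : ℂ), 0; 0, (normSq a : ℂ)⁻¹] := by
  ext i j
  fin_cases i <;> fin_cases j <;> simp [Matrix.mul_apply, normSq_eq_conj_mul_self, mul_comm]

theorem map_conj_antidiag_mul_antidiag (q : ℂ) :
    (!![0, q; -q⁻¹, 0]).map conj * !![0, q; -q⁻¹, 0] =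
      !![-conj q * q⁻¹, 0; 0, (-conj q * q⁻¹)⁻¹] := by
  ext i j
  fin_cases i <;> fin_cases j <;> simp [Matrix.mul_apply, mul_comm]

theorem neg_conj_mul_inv_eq_inv_sq_iff {q w : ℂ} (hq : q ≠ 0) (hw : ‖w‖ = 1) :
    -conj q * q⁻¹ = (w ^ 2)⁻¹ ↔ ∃ x : ℝ, q = I * x * w := by
  have hw0 : w ≠ 0 := norm_ne_zero_iff.mp (by rw [hw]; exact one_ne_zero)
  have hcw : conj w = w⁻¹ := (inv_eq_conj hw).symm
  constructor
  · intro h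
    have hcq : conj q = -(w ^ 2)⁻¹ * q := by
      field_simp at h ⊢
      linear_combination -h
    obtain ⟨x, hx⟩ := conj_eq_iff_real.mp (show conj (-I * q * conj w) = -I * q * conj w by
      simp only [map_mul, map_neg, conj_I, hcq, conj_conj]
      rw [hcw]
      field_simp)
    refine ⟨x, ?_⟩
    rw [← hx, hcw]
    field_simp
    linear_combination I_sq
  · rintro ⟨x, rfl⟩
    have hx : (x : ℂ) ≠ 0 := by rintro hx; simp [hx] at hq
    simp only [map_mul, conj_I, conj_ofReal, hcw]
    field_simp

theorem neg_inv_I_mul (z w : ℂ) : -(I * z * w)⁻¹ = I * z⁻¹ * w⁻¹ := by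
  rw [mul_inv, mul_inv, inv_I]
  ring

/-- Representatives of the three families of the theorem with the factor `h ∈ A_k` absorbed;
`ζ₂` stands for `ζ_{2k}`. -/
def IsCocycleNormalForm (ζ₂ : ℂ) (M : Matrix (Fin 2) (Fin 2) ℂ) : Prop :=
  (∃ a : ℂ, ‖a‖ = 1 ∧ M = !![a, 0; 0, a⁻¹]) ∨
    ∃ x : ℝ, x ≠ 0 ∧ ∃ j : ℤ, M = !![0, I * x * ζ₂ ^ j; -(I * x * ζ₂ ^ j)⁻¹, 0]

section Cocycle

variable {ζ ζ₂ : ℂ} {ω : SL(2, ℂ)}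

theorem zpow_sq_of_sq_eq (hsq : ζ₂ ^ 2 = ζ) (j : ℤ) : (ζ₂ ^ j) ^ 2 = ζ ^ j := by
  rw [← zpow_natCast, ← _root_.zpow_mul, mul_comm, _root_.zpow_mul, zpow_natCast, hsq]

theorem exists_mem_zpowers_mul_iff (hω : (ω : Matrix (Fin 2) (Fin 2) ℂ) = !![ζ, 0; 0, ζ⁻¹])
    (hsq : ζ₂ ^ 2 = ζ) (hζ : ‖ζ‖ = 1) (M : Matrix (Fin 2) (Fin 2) ℂ) :
    (∃ h ∈ Subgroup.zpowers ω,
        (∃ a : ℂ, ‖a‖ = 1 ∧ M = !![a, 0; 0, a⁻¹] * (↑h : Matrix (Fin 2) (Fin 2) ℂ)) ∨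
        (∃ x : ℝ, x ≠ 0 ∧
          M = !![0, I * (x : ℂ); I * (x : ℂ)⁻¹, 0] * (↑h : Matrix (Fin 2) (Fin 2) ℂ)) ∨
        (∃ x : ℝ, x ≠ 0 ∧
          M = !![0, I * (x : ℂ) * ζ₂; I * (x : ℂ)⁻¹ * ζ₂⁻¹, 0]
            * (↑h : Matrix (Fin 2) (Fin 2) ℂ))) ↔
      IsCocycleNormalForm ζ₂ M := by
  have hζ₂0 : ζ₂ ≠ 0 := by
    rintro rfl
    exact ne_zero_of_coe_eq_diag hω (by simp [← hsq])
  have hshift (x : ℝ) (i n : ℤ) :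
      !![0, I * x * ζ₂ ^ i; -(I * x * ζ₂ ^ i)⁻¹, 0] * !![ζ ^ n, 0; 0, (ζ ^ n)⁻¹] =
        !![0, I * x * ζ₂ ^ (i - 2 * n); -(I * x * ζ₂ ^ (i - 2 * n))⁻¹, 0] := by
    rw [antidiag_mul_diag, ← zpow_sq_of_sq_eq hsq, mul_assoc, ← zpow_natCast, ← _root_.zpow_mul,
      ← _root_.zpow_neg, ← zpow_add₀ hζ₂0]
    ring_nf
  have hform₂ (x : ℝ) : !![0, I * (x : ℂ); I * (x : ℂ)⁻¹, 0] =
      !![0, I * x * ζ₂ ^ (0 : ℤ); -(I * x * ζ₂ ^ (0 : ℤ))⁻¹, 0] := by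
    rw [neg_inv_I_mul]
    simp only [zpow_zero, inv_one, mul_one]
  have hform₃ (x : ℝ) : !![0, I * (x : ℂ) * ζ₂; I * (x : ℂ)⁻¹ * ζ₂⁻¹, 0] =
      !![0, I * x * ζ₂ ^ (1 : ℤ); -(I * x * ζ₂ ^ (1 : ℤ))⁻¹, 0] := by
    rw [neg_inv_I_mul, zpow_one]
  simp only [Subgroup.exists_mem_zpowers, coe_zpow_of_coe_eq_diag hω, hform₂, hform₃, hshift,
    diag_mul_diag]
  constructor
  · rintro ⟨n, ⟨a, ha, rfl⟩ | ⟨x, hx, rfl⟩ | ⟨x, hx, rfl⟩⟩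
    · exact Or.inl ⟨a * ζ ^ n, by simp [ha, hζ, norm_zpow], rfl⟩
    · exact Or.inr ⟨x, hx, _, rfl⟩
    · exact Or.inr ⟨x, hx, _, rfl⟩
  · rintro (⟨a, ha, rfl⟩ | ⟨x, hx, j, rfl⟩)
    · exact ⟨0, Or.inl ⟨a, ha, by simp⟩⟩
    · obtain ⟨n, rfl | rfl⟩ := Int.even_or_odd' j
      · exact ⟨-n, Or.inr (Or.inl ⟨x, hx, by ring_nf⟩)⟩
      · exact ⟨-n, Or.inr (Or.inr ⟨x, hx, by ring_nf⟩)⟩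

theorem map_conj_mul_self_mem_zpowers_iff
    (hω : (ω : Matrix (Fin 2) (Fin 2) ℂ) = !![ζ, 0; 0, ζ⁻¹]) (hsq : ζ₂ ^ 2 = ζ) (hζ : ‖ζ‖ = 1)
    (hζinv : ζ ≠ ζ⁻¹) {g : SL(2, ℂ)}
    (hg : g ∈ Subgroup.normalizer (Subgroup.zpowers ω : Set SL(2, ℂ))) :
    SpecialLinearGroup.map (starRingEnd ℂ) g * g ∈ Subgroup.zpowers ω ↔
      IsCocycleNormalForm ζ₂ g := by
  have hζ₂ : ‖ζ₂‖ = 1 :=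
    (pow_eq_one_iff_of_nonneg (norm_nonneg _) two_ne_zero).mp (by rw [← norm_pow, hsq, hζ])
  have hcoe : (↑(SpecialLinearGroup.map (starRingEnd ℂ) g * g) : Matrix (Fin 2) (Fin 2) ℂ) =
      (g : Matrix (Fin 2) (Fin 2) ℂ).map conj * g := rfl
  constructor
  · intro hmem
    rcases eq_diag_or_antidiag_of_mem_normalizer hω hζinv hg with ⟨u, hu⟩ | ⟨q, hq⟩
    · obtain ⟨j, hj⟩ := (mem_zpowers_iff_of_coe_eq_diag hω
        (by rw [hcoe, hu, map_conj_diag_mul_diag])).mp hmem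
      refine Or.inl ⟨u, ?_, hu⟩
      have hu1 : ‖u‖ ^ 2 = 1 := by
        simpa [norm_zpow, hζ, normSq_eq_norm_sq] using (congrArg norm hj).symm
      exact (pow_eq_one_iff_of_nonneg (norm_nonneg u) two_ne_zero).mp hu1
    · obtain ⟨j, hj⟩ := (mem_zpowers_iff_of_coe_eq_diag hω
        (by rw [hcoe, hq, map_conj_antidiag_mul_antidiag])).mp hmem
      have hq0 : q ≠ 0 := by
        rintro rfl
        exact zpow_ne_zero j (ne_zero_of_coe_eq_diag hω) (by simpa using hj)
      obtain ⟨x, rfl⟩ := (neg_conj_mul_inv_eq_inv_sq_iff hq0 (w := ζ₂ ^ (-j))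
        (by simp [norm_zpow, hζ₂])).mp
        (by rw [zpow_sq_of_sq_eq hsq, _root_.zpow_neg, inv_inv, hj])
      refine Or.inr ⟨x, ?_, -j, hq⟩
      rintro rfl
      simp at hq0
  · rintro (⟨a, ha, hga⟩ | ⟨x, hx, j, hgx⟩)
    · rw [mem_zpowers_iff_of_coe_eq_diag hω (by rw [hcoe, hga, map_conj_diag_mul_diag])]
      exact ⟨0, by simp [normSq_eq_norm_sq, ha]⟩
    · rw [mem_zpowers_iff_of_coe_eq_diag hω (by rw [hcoe, hgx, map_conj_antidiag_mul_antidiag])]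
      refine ⟨-j, ?_⟩
      have hq0 : I * x * ζ₂ ^ j ≠ 0 :=
        mul_ne_zero (mul_ne_zero I_ne_zero (ofReal_ne_zero.mpr hx))
          (zpow_ne_zero j (norm_ne_zero_iff.mp (by simp [hζ₂])))
      rw [(neg_conj_mul_inv_eq_inv_sq_iff hq0 (by simp [norm_zpow, hζ₂])).mpr ⟨x, rfl⟩,
        zpow_sq_of_sq_eq hsq, _root_.zpow_neg]

end Cocycle

theorem statement8_general (k : ℕ) (hk : 4 ≤ k)
    (ζ ζ₂ : ℂ) (hζ : IsPrimitiveRoot ζ k)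
    (hsq : ζ₂ ^ 2 = ζ)
    (ω : Matrix.SpecialLinearGroup (Fin 2) ℂ)
    (hω : (↑ω : Matrix (Fin 2) (Fin 2) ℂ) = !![ζ, 0; 0, ζ⁻¹])
    (g : Matrix.SpecialLinearGroup (Fin 2) ℂ)
    (hg : g ∈ Subgroup.normalizer (Subgroup.zpowers ω : Set (Matrix.SpecialLinearGroup (Fin 2) ℂ))) :
    Matrix.SpecialLinearGroup.map (starRingEnd ℂ) g * g ∈ Subgroup.zpowers ω ↔
      ∃ h ∈ Subgroup.zpowers ω,
        (∃ a : ℂ, ‖a‖ = 1 ∧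
          (↑g : Matrix (Fin 2) (Fin 2) ℂ)
            = !![a, 0; 0, a⁻¹] * (↑h : Matrix (Fin 2) (Fin 2) ℂ)) ∨
        (∃ x : ℝ, x ≠ 0 ∧
          (↑g : Matrix (Fin 2) (Fin 2) ℂ)
            = !![0, Complex.I * (x : ℂ); Complex.I * (x : ℂ)⁻¹, 0]
                * (↑h : Matrix (Fin 2) (Fin 2) ℂ)) ∨
        (∃ x : ℝ, x ≠ 0 ∧
          (↑g : Matrix (Fin 2) (Fin 2) ℂ)
            = !![0, Complex.I * (x : ℂ) * ζ₂; Complex.I * (x : ℂ)⁻¹ * ζ₂⁻¹, 0]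
                * (↑h : Matrix (Fin 2) (Fin 2) ℂ)) := by
  have hζ1 : ‖ζ‖ = 1 := norm_eq_one_of_pow_eq_one hζ.pow_eq_one (by omega)
  have hζinv : ζ ≠ ζ⁻¹ := fun h ↦ hζ.pow_ne_one_of_pos_of_lt two_ne_zero (by omega)
    (by rw [sq]; nth_rewrite 2 [h]; exact mul_inv_cancel₀ (hζ.ne_zero (by omega)))
  rw [map_conj_mul_self_mem_zpowers_iff hω hsq hζ1 hζinv hg, exists_mem_zpowers_mul_iff hω hsq hζ1]

/-- Let `k ≥ 4` be even, `ζ` a primitive `k`-th root of unity, `ζ₂` a primitive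
`2k`-th root of unity with `ζ₂² = ζ`, `A_k = ⟨ω⟩` with `ω = diag(ζ, ζ⁻¹)`, and let `g` lie in
the normalizer of `A_k` in `SL₂(ℂ)`. Then `σ_s(g)·g ∈ A_k` iff there is `h ∈ A_k` with
(1) `g = diag(a, a⁻¹)·h`, `|a| = 1`; or (2) `g = !![0, i·x; i·x⁻¹, 0]·h`, `x ∈ ℝ*`; or
(3) `g = !![0, i·x·ζ₂; i·x⁻¹·ζ₂⁻¹, 0]·h`, `x ∈ ℝ*`. -/
theorem statement8 (k : ℕ) (hk : 4 ≤ k) (hev : Even k)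
    (ζ ζ₂ : ℂ) (hζ : IsPrimitiveRoot ζ k) (hζ₂ : IsPrimitiveRoot ζ₂ (2 * k))
    (hsq : ζ₂ ^ 2 = ζ)
    (ω : Matrix.SpecialLinearGroup (Fin 2) ℂ)
    (hω : (↑ω : Matrix (Fin 2) (Fin 2) ℂ) = !![ζ, 0; 0, ζ⁻¹])
    (g : Matrix.SpecialLinearGroup (Fin 2) ℂ)
    (hg : g ∈ Subgroup.normalizer (Subgroup.zpowers ω : Set (Matrix.SpecialLinearGroup (Fin 2) ℂ))) :
    Matrix.SpecialLinearGroup.map (starRingEnd ℂ) g * g ∈ Subgroup.zpowers ω ↔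
      ∃ h ∈ Subgroup.zpowers ω,
        (∃ a : ℂ, ‖a‖ = 1 ∧
          (↑g : Matrix (Fin 2) (Fin 2) ℂ)
            = !![a, 0; 0, a⁻¹] * (↑h : Matrix (Fin 2) (Fin 2) ℂ)) ∨
        (∃ x : ℝ, x ≠ 0 ∧
          (↑g : Matrix (Fin 2) (Fin 2) ℂ)
            = !![0, Complex.I * (x : ℂ); Complex.I * (x : ℂ)⁻¹, 0]
                * (↑h : Matrix (Fin 2) (Fin 2) ℂ)) ∨
        (∃ x : ℝ, x ≠ 0 ∧
          (↑g : Matrix (Fin 2) (Fin 2) ℂ)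
            = !![0, Complex.I * (x : ℂ) * ζ₂; Complex.I * (x : ℂ)⁻¹ * ζ₂⁻¹, 0]
                * (↑h : Matrix (Fin 2) (Fin 2) ℂ)) :=
  statement8_general k hk ζ ζ₂ hζ hsq ω hω g hg
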